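/- arXiv:2001.02071 — 4 statements merged into one kernel-verified Lean document; each statement's English description precedes it below -/
import Mathlib

section
/- Suppose each u_i : ℝ^J → ℝ ∪ {−∞} is upper semicontinuous and concave with u_i(x⁰_i) finite, and Assumption R holds: whenever ∑_i x_i = 0 and u_i^∞(x_i) ≥ 0 for all i, then x = 0, where u_i^∞(y) := inf_{α>0} (u_i(x⁰_i + α·y) − u_i(x⁰_i))/α. Then the set C := {x ∈ (ℝ^J)^I : ∑_i x_i = ∑_i x⁰_i and u_i(x_i) ≥ u_i(x⁰_i) for all i} is bounded. -/
open scoped BigOperators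
open Metric Filter

noncomputable section

/-- The inner product `p·y = ∑ j, p j * y j`. -/
def dotp {J : Type*} [Fintype J] (p y : EuclideanSpace ℝ J) : ℝ := ∑ j, p j * y j

/-- A function `u : ℝ^J → ℝ ∪ {±∞}` is concave iff its hypograph is convex. -/
def HypoConcave {J : Type*} [Fintype J] (u : EuclideanSpace ℝ J → EReal) : Prop :=
  Convex ℝ {q : EuclideanSpace ℝ J × ℝ | (q.2 : EReal) ≤ u q.1}

/-- Indifference price function `D(x) = sup {r ∈ ℝ : u(x⁰ + x − r·g) ≥ u(x⁰)}`,
the supremum being taken in `ℝ ∪ {±∞}`. -/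
def indiff {J : Type*} [Fintype J] (u : EuclideanSpace ℝ J → EReal)
    (x0 g x : EuclideanSpace ℝ J) : EReal :=
  sSup {e : EReal | ∃ r : ℝ, e = (r : EReal) ∧ u x0 ≤ u (x0 + x - r • g)}

/-- `p` is a supergradient of `D` at `xb`: `D xb` is finite and
`D x ≤ D xb + p·(x − xb)` for all `x`. -/
def IsSupergradient {J : Type*} [Fintype J] (D : EuclideanSpace ℝ J → EReal)
    (p xb : EuclideanSpace ℝ J) : Prop :=
  D xb ≠ ⊥ ∧ D xb ≠ ⊤ ∧ ∀ x, D x ≤ D xb + ((dotp p (x - xb) : ℝ) : EReal)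

/-- Optimal value `v(z)` of the perturbed market clearing problem `(P_z)`. -/
def marketValue {I J : Type*} [Fintype I] [Fintype J]
    (D : I → EuclideanSpace ℝ J → EReal) (z : EuclideanSpace ℝ J) : EReal :=
  sSup {e : EReal | ∃ x : I → EuclideanSpace ℝ J, (∑ i, x i) = z ∧ e = ∑ i, D i (x i)}

/-- Optimal value of problem `(P')`, the total consumer surplus at allocation `w`. -/
def CSval {I J : Type*} [Fintype I] [Fintype J]
    (u : I → EuclideanSpace ℝ J → EReal) (g : EuclideanSpace ℝ J)
    (w : I → EuclideanSpace ℝ J) : EReal :=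
  sSup {e : EReal | ∃ s : ℝ, e = (s : EReal) ∧ ∃ z : I → EuclideanSpace ℝ J,
    (∑ i, z i) + s • g = ∑ i, w i ∧ ∀ i, u i (w i) ≤ u i (z i)}

/-- Recession function `u^∞(y) = inf_{α>0} (u(x⁰ + α·y) − u(x⁰))/α`. -/
def recession {J : Type*} [Fintype J] (u : EuclideanSpace ℝ J → EReal)
    (x0 y : EuclideanSpace ℝ J) : EReal :=
  sInf {e : EReal | ∃ α : ℝ, 0 < α ∧ e = (u (x0 + α • y) - u x0) / (α : EReal)}

/-- Pareto efficiency of an allocation `x` with total endowment `∑ i, x i`. -/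
def ParetoEfficient {I J : Type*} [Fintype I] [Fintype J]
    (u : I → EuclideanSpace ℝ J → EReal) (x : I → EuclideanSpace ℝ J) : Prop :=
  ¬ ∃ x' : I → EuclideanSpace ℝ J, (∑ i, x' i) = (∑ i, x i) ∧
      (∀ i, u i (x i) ≤ u i (x' i)) ∧ ∃ i, u i (x i) < u i (x' i)

open Topology

/-! If the set were unbounded then, being closed and convex (an affine subspace intersected with
upper level sets of upper semicontinuous concave functions), it would contain a ray `x⁰ + ℝ₊ d`
with `‖d‖ = 1`: take a limit point of the normalized directions `(xₙ - x⁰) / ‖xₙ - x⁰‖` for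
`‖xₙ‖ → ∞`. Along that ray `∑ i, d i = 0` and `u i (x⁰ i + α d i) ≥ u i (x⁰ i)`, so every
recession value `u i^∞ (d i)` is nonnegative, and Assumption R forces `d = 0`. -/

theorem HypoConcave.convex_setOf_le {J : Type*} [Fintype J] {u : EuclideanSpace ℝ J → EReal}
    (hu : HypoConcave u) (c : EReal) : Convex ℝ {x | c ≤ u x} := by
  intro x hx y hy a b ha hb hab
  refine EReal.ge_of_forall_gt_iff_ge.mp fun z hz => ?_
  have hxz : ((x, z) : EuclideanSpace ℝ J × ℝ) ∈ {q | (q.2 : EReal) ≤ u q.1} := hz.le.trans hx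
  have hyz : ((y, z) : EuclideanSpace ℝ J × ℝ) ∈ {q | (q.2 : EReal) ≤ u q.1} := hz.le.trans hy
  simpa [← add_mul, hab] using hu hxz hyz ha hb hab

theorem Convex.add_smul_mem_of_tendsto {E : Type*} [NormedAddCommGroup E] [NormedSpace ℝ E]
    {C : Set E} (hconv : Convex ℝ C) (hC : IsClosed C) {x₀ d : E} (hx₀ : x₀ ∈ C)
    {x : ℕ → E} {t : ℕ → ℝ} (hx : ∀ n, x n ∈ C) (ht : Tendsto t atTop atTop)
    (hd : Tendsto (fun n => (t n)⁻¹ • (x n - x₀)) atTop (𝓝 d)) {α : ℝ} (hα : 0 ≤ α) :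
    x₀ + α • d ∈ C := by
  refine hC.mem_of_tendsto (tendsto_const_nhds.add (hd.const_smul α)) ?_
  filter_upwards [ht.eventually_ge_atTop α, ht.eventually_gt_atTop 0] with n hαt htpos
  rw [smul_smul]
  exact hconv.add_smul_sub_mem hx₀ (hx n)
    ⟨mul_nonneg hα (inv_nonneg.mpr htpos.le), mul_inv_le_one_of_le₀ hαt htpos.le⟩

theorem Convex.exists_norm_eq_one_forall_add_smul_mem {E : Type*} [NormedAddCommGroup E]
    [NormedSpace ℝ E] [ProperSpace E] {C : Set E} (hconv : Convex ℝ C) (hC : IsClosed C)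
    {x₀ : E} (hx₀ : x₀ ∈ C) (hunb : ¬ Bornology.IsBounded C) :
    ∃ d : E, ‖d‖ = 1 ∧ ∀ α : ℝ, 0 ≤ α → x₀ + α • d ∈ C := by
  have hfar : ∀ n : ℕ, ∃ x ∈ C, (n : ℝ) < ‖x - x₀‖ := by
    intro n
    by_contra! h
    exact hunb ((isBounded_closedBall (x := x₀) (r := n)).subset fun x hx =>
      mem_closedBall_iff_norm.mpr (h x hx))
  choose x hxC hxfar using hfar
  set t : ℕ → ℝ := fun n => ‖x n - x₀‖
  have ht : Tendsto t atTop atTop :=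
    tendsto_atTop_mono (fun n => (hxfar n).le) tendsto_natCast_atTop_atTop
  have hsphere : ∀ n, (t n)⁻¹ • (x n - x₀) ∈ sphere (0 : E) 1 := fun n => by
    have htpos : 0 < t n := (Nat.cast_nonneg n).trans_lt (hxfar n)
    simp [norm_smul, htpos.ne', t]
  obtain ⟨d, hd, φ, hφ, hlim⟩ := (isCompact_sphere (0 : E) 1).tendsto_subseq hsphere
  refine ⟨d, mem_sphere_zero_iff_norm.mp hd, fun α hα => ?_⟩
  exact hconv.add_smul_mem_of_tendsto hC hx₀ (fun n => hxC (φ n)) (ht.comp hφ.tendsto_atTop)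
    hlim hα

theorem recession_nonneg_of_forall_le {J : Type*} [Fintype J] {u : EuclideanSpace ℝ J → EReal}
    {x₀ y : EuclideanSpace ℝ J} (hbot : u x₀ ≠ ⊥) (htop : u x₀ ≠ ⊤)
    (h : ∀ α : ℝ, 0 < α → u x₀ ≤ u (x₀ + α • y)) : 0 ≤ recession u x₀ y := by
  refine le_sInf ?_
  rintro _ ⟨α, hα, rfl⟩
  exact EReal.div_nonneg ((EReal.sub_nonneg (.inr htop) (.inr hbot)).mpr (h α hα))
    (EReal.coe_nonneg.mpr hα.le)

section RationalFeasibleSet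

variable {I J : Type*} [Fintype I] [Fintype J] (u : I → EuclideanSpace ℝ J → EReal)
  (x₀ : I → EuclideanSpace ℝ J)

def rationalFeasibleSet : Set (I → EuclideanSpace ℝ J) :=
  {x | (∑ i, x i) = (∑ i, x₀ i) ∧ ∀ i, u i (x₀ i) ≤ u i (x i)}

theorem isClosed_rationalFeasibleSet (husc : ∀ i, UpperSemicontinuous (u i)) :
    IsClosed (rationalFeasibleSet u x₀) := by
  rw [rationalFeasibleSet, Set.ofPred_and, Set.ofPred_forall]
  refine (isClosed_eq (continuous_finsetSum _ fun i _ => continuous_apply i)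
    continuous_const).inter (isClosed_iInter fun i => ?_)
  exact ((husc i).isClosed_preimage (u i (x₀ i))).preimage
    (continuous_apply (A := fun _ : I => EuclideanSpace ℝ J) i)

theorem convex_rationalFeasibleSet (hconc : ∀ i, HypoConcave (u i)) :
    Convex ℝ (rationalFeasibleSet u x₀) := by
  rw [rationalFeasibleSet, Set.ofPred_and, Set.ofPred_forall]
  refine Convex.inter ?_ (convex_iInter fun i => ?_)
  · intro x hx y hy a b _ _ hab
    simp_all [Finset.sum_add_distrib, ← Finset.smul_sum, ← add_smul]
  · exact ((hconc i).convex_setOf_le (u i (x₀ i))).linear_preimage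
      (LinearMap.proj (R := ℝ) (φ := fun _ : I => EuclideanSpace ℝ J) i)

end RationalFeasibleSet

theorem rational_feasible_set_bounded_general
    {I J : Type*} [Fintype I] [Fintype J]
    (u : I → EuclideanSpace ℝ J → EReal)
    (x0 : I → EuclideanSpace ℝ J)
    (husc : ∀ i, UpperSemicontinuous (u i))
    (hconc : ∀ i, HypoConcave (u i))
    (hne_top : ∀ i x, u i x ≠ ⊤)
    (hfin : ∀ i, u i (x0 i) ≠ ⊥)
    (hrec : ∀ x : I → EuclideanSpace ℝ J, (∑ i, x i) = 0 →
      (∀ i, 0 ≤ recession (u i) (x0 i) (x i)) → x = 0) :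
    Bornology.IsBounded
      {x : I → EuclideanSpace ℝ J |
        (∑ i, x i) = (∑ i, x0 i) ∧ ∀ i, u i (x0 i) ≤ u i (x i)} := by
  by_contra hunb
  obtain ⟨d, hd_norm, hd⟩ :=
    (convex_rationalFeasibleSet u x0 hconc).exists_norm_eq_one_forall_add_smul_mem
      (isClosed_rationalFeasibleSet u x0 husc) ⟨rfl, fun i => le_rfl⟩ hunb
  have hd_sum : (∑ i, d i) = 0 := by
    simpa [Finset.sum_add_distrib] using (hd 1 zero_le_one).1
  have hd_rec : ∀ i, 0 ≤ recession (u i) (x0 i) (d i) := fun i =>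
    recession_nonneg_of_forall_le (hfin i) (hne_top i _) fun α hα => (hd α hα.le).2 i
  simp [hrec d hd_sum hd_rec] at hd_norm

/-- under Assumption R the set of individually rational feasible
allocations is bounded. -/
theorem rational_feasible_set_bounded
    {I J : Type*} [Fintype I] [Nonempty I] [Fintype J] [Nonempty J]
    (u : I → EuclideanSpace ℝ J → EReal)
    (x0 : I → EuclideanSpace ℝ J)
    (husc : ∀ i, UpperSemicontinuous (u i))
    (hconc : ∀ i, HypoConcave (u i))
    (hne_top : ∀ i x, u i x ≠ ⊤)
    (hfin : ∀ i, u i (x0 i) ≠ ⊥)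
    (hrec : ∀ x : I → EuclideanSpace ℝ J, (∑ i, x i) = 0 →
      (∀ i, 0 ≤ recession (u i) (x0 i) (x i)) → x = 0) :
    Bornology.IsBounded
      {x : I → EuclideanSpace ℝ J |
        (∑ i, x i) = (∑ i, x0 i) ∧ ∀ i, u i (x0 i) ≤ u i (x i)} :=
  rational_feasible_set_bounded_general u x0 husc hconc hne_top hfin hrec
end
end

section
/- Under Assumption G (each u_i is upper semicontinuous, concave, u_i(x⁰_i) finite, and u_i(x + r·g) > u_i(x) whenever u_i(x) > −∞ and r > 0): if the allocation x⁰ = (x⁰_i)_{i∈I} is Pareto efficient, then x⁰ is a double auction equilibrium, i.e. CS(x⁰) := sup{∑_i D_i(x_i) : ∑_i x_i = 0} = 0. -/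
open scoped BigOperators
open Metric Filter

noncomputable section

/-
If the allocation `x` clears the market and `∑ i, D_i(x_i) > 0`, the positive total can be
split into real prices `b_i < D_i(x_i)` summing to zero. Strict monotonicity along `g` makes
each agent strictly prefer `x⁰_i + x_i - b_i • g` to `x⁰_i`, and these bundles again add up to
the total endowment, contradicting Pareto efficiency. The zero trade, with
`D_i(0) ≥ 0`, gives the reverse inequality.
-/

namespace EReal

lemma exists_add_eq_of_lt_add {x y : EReal} {a : ℝ} (h : (a : EReal) < x + y) :
    ∃ b c : ℝ, (b : EReal) < x ∧ (c : EReal) < y ∧ b + c = a := by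
  obtain ⟨x', hx', y', hy', hlt⟩ : ∃ x' < x, ∃ y' < y, (a : EReal) < x' + y' := by
    by_contra! hle
    exact h.not_ge (add_le_of_forall_lt hle)
  have hx'_bot : x' ≠ ⊥ := by rintro rfl; simp at hlt
  have hy'_bot : y' ≠ ⊥ := by rintro rfl; simp at hlt
  lift x' to ℝ using ⟨hx'.ne_top, hx'_bot⟩
  lift y' to ℝ using ⟨hy'.ne_top, hy'_bot⟩
  refine ⟨x', a - x', hx', lt_trans ?_ hy', by ring⟩
  norm_cast at hlt ⊢
  linarith

lemma exists_sum_eq_of_lt_sum {ι : Type*} {s : Finset ι} (hs : s.Nonempty) {f : ι → EReal}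
    {a : ℝ} (h : (a : EReal) < ∑ i ∈ s, f i) :
    ∃ b : ι → ℝ, (∀ i ∈ s, (b i : EReal) < f i) ∧ ∑ i ∈ s, b i = a := by
  classical
  induction hs using Finset.Nonempty.cons_induction generalizing a with
  | singleton i => exact ⟨fun _ => a, by simpa using h, by simp⟩
  | cons i s hi _ ih =>
    rw [Finset.sum_cons] at h
    obtain ⟨bi, c, hbi, hc, rfl⟩ := exists_add_eq_of_lt_add h
    obtain ⟨b, hb, hsum⟩ := ih hc
    refine ⟨Function.update b i bi, ?_, ?_⟩
    · simp only [Finset.mem_cons, forall_eq_or_imp, Function.update_self]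
      refine ⟨hbi, fun j hj => ?_⟩
      rw [Function.update_of_ne (ne_of_mem_of_not_mem hj hi)]
      exact hb j hj
    · rw [Finset.sum_cons, Function.update_self, Finset.sum_update_of_notMem hi, hsum]

end EReal

section indiff

variable {J : Type*} [Fintype J] {u : EuclideanSpace ℝ J → EReal}
  {x0 g x : EuclideanSpace ℝ J}

lemma indiff_zero_nonneg : 0 ≤ indiff u x0 g 0 :=
  le_sSup ⟨0, by simp, by simp⟩

lemma lt_of_lt_indiff (hfin : u x0 ≠ ⊥)
    (hmono : ∀ y : EuclideanSpace ℝ J, ∀ r : ℝ, u y ≠ ⊥ → 0 < r →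
      u y < u (y + r • g))
    {b : ℝ} (hb : (b : EReal) < indiff u x0 g x) : u x0 < u (x0 + x - b • g) := by
  obtain ⟨_, ⟨r, rfl, hr⟩, hbr⟩ := lt_sSup_iff.mp hb
  have hne_bot : u (x0 + x - r • g) ≠ ⊥ := ne_bot_of_le_ne_bot hfin hr
  calc u x0 ≤ u (x0 + x - r • g) := hr
    _ < u (x0 + x - r • g + (r - b) • g) :=
      hmono _ _ hne_bot (sub_pos.2 (EReal.coe_lt_coe_iff.1 hbr))
    _ = u (x0 + x - b • g) := by congr 1; module

end indiff

theorem pareto_implies_equilibrium_general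
    {I J : Type*} [Fintype I] [Fintype J]
    (u : I → EuclideanSpace ℝ J → EReal) (g : EuclideanSpace ℝ J)
    (x0 : I → EuclideanSpace ℝ J)
    (hfin : ∀ i, u i (x0 i) ≠ ⊥)
    (hmono : ∀ i, ∀ x : EuclideanSpace ℝ J, ∀ r : ℝ, u i x ≠ ⊥ → 0 < r →
      u i x < u i (x + r • g))
    (hpareto : ParetoEfficient u x0) :
    marketValue (fun i => indiff (u i) (x0 i) g) 0 = 0 := by
  refine le_antisymm (sSup_le ?_) (le_sSup_of_le ⟨0, by simp, rfl⟩ ?_)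
  · rintro _ ⟨x, hx, rfl⟩
    by_contra! hpos
    have hI : (Finset.univ : Finset I).Nonempty := Finset.nonempty_of_sum_ne_zero hpos.ne'
    obtain ⟨b, hb, hbsum⟩ := EReal.exists_sum_eq_of_lt_sum hI (a := 0) (by exact_mod_cast hpos)
    have hbetter i : u i (x0 i) < u i (x0 i + x i - b i • g) :=
      lt_of_lt_indiff (hfin i) (hmono i) (hb i (Finset.mem_univ i))
    obtain ⟨i, -⟩ := hI
    refine hpareto ⟨_, ?_, fun i => (hbetter i).le, i, hbetter i⟩
    simp only [Finset.sum_sub_distrib, Finset.sum_add_distrib, ← Finset.sum_smul, hx, hbsum,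
      zero_smul, add_zero, sub_zero]
  · exact Finset.sum_nonneg fun i _ => indiff_zero_nonneg

/-- Theorem pareto, first part: Pareto allocations are double
auction equilibria. -/
theorem pareto_implies_equilibrium
    {I J : Type*} [Fintype I] [Nonempty I] [Fintype J] [Nonempty J]
    (u : I → EuclideanSpace ℝ J → EReal) (g : EuclideanSpace ℝ J)
    (x0 : I → EuclideanSpace ℝ J)
    (husc : ∀ i, UpperSemicontinuous (u i))
    (hconc : ∀ i, HypoConcave (u i))
    (hne_top : ∀ i x, u i x ≠ ⊤)
    (hfin : ∀ i, u i (x0 i) ≠ ⊥)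
    (hmono : ∀ i, ∀ x : EuclideanSpace ℝ J, ∀ r : ℝ, u i x ≠ ⊥ → 0 < r →
      u i x < u i (x + r • g))
    (hpareto : ParetoEfficient u x0) :
    marketValue (fun i => indiff (u i) (x0 i) g) 0 = 0 :=
  pareto_implies_equilibrium_general u g x0 hfin hmono hpareto
end
end

section
/- Suppose Assumption G holds (each u_i is upper semicontinuous, concave, u_i(x⁰_i) finite, and u_i(x + r·g) > u_i(x) whenever u_i(x) > −∞ and r > 0) and Assumption S holds: there is ε > 0 such that v(z) := sup{∑_i D_i(x_i) : ∑_i x_i = z} is finite for all ‖z‖ ≤ ε. Then x⁰ is a double auction equilibrium (CS(x⁰) = v(0) = 0) if and only if there exists a price vector p ∈ ℝ^J that is a supergradient of D_i at 0 for every i ∈ I. -/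
open scoped BigOperators
open Metric Filter

noncomputable section

/-!
Each `indiff (u i) (x0 i) g` vanishes at `0` because `u i` is strictly increasing along `g`.
A common supergradient `p` therefore gives `indiff (u i) (x0 i) g ≤ p·`, hence `v z ≤ p·z`
and `v 0 = 0`. Conversely, the pairs (aggregate trade, aggregate payment) that leave every
agent at least as well off form a convex set (the `u i` are concave) lying below the graph of
`v`, whose projection contains a ball around `0` by Assumption S. In finite dimension such a
set has nonempty interior, so it has a supporting hyperplane at `(0, v 0) = (0, 0)`; the ball
forces the hyperplane to be non-vertical, and its slope is the common supergradient.
-/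

section ConvexHypograph

variable {E : Type*} [NormedAddCommGroup E] [NormedSpace ℝ E]

theorem LinearMap.eq_zero_of_forall_mem_ball_nonpos {f : E →ₗ[ℝ] ℝ} {ε : ℝ} (hε : 0 < ε)
    (hf : ∀ z ∈ ball (0 : E) ε, f z ≤ 0) : f = 0 := by
  have hker : ball (0 : E) ε ⊆ LinearMap.ker f := fun z hz ↦
    le_antisymm (hf z hz) (by simpa using hf (-z) (by simpa using hz))
  exact LinearMap.ker_eq_top.1 <| Submodule.eq_top_of_nonempty_interior' _
    ⟨0, mem_interior.2 ⟨_, hker, isOpen_ball, mem_ball_self hε⟩⟩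

variable [FiniteDimensional ℝ E] {K : Set (E × ℝ)}

theorem Convex.interior_nonempty_of_forall_mem_ball_exists_prod_mem (hK : Convex ℝ K)
    (hdown : ∀ z s t, (z, s) ∈ K → t ≤ s → (z, t) ∈ K) {x : E} {ε : ℝ} (hε : 0 < ε)
    (hfib : ∀ z ∈ ball x ε, ∃ s, (z, s) ∈ K) : (interior K).Nonempty := by
  obtain ⟨s₀, h₀⟩ := hfib x (mem_ball_self hε)
  rw [hK.interior_nonempty_iff_affineSpan_eq_top,
    AffineSubspace.affineSpan_eq_top_iff_vectorSpan_eq_top_of_nonempty _ _ _ ⟨_, h₀⟩]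
  have hvert : ((0 : E), (1 : ℝ)) ∈ vectorSpan ℝ K := by
    simpa using vsub_mem_vectorSpan ℝ h₀ (hdown _ _ (s₀ - 1) h₀ (by linarith))
  have hhor : ball (0 : E) ε ⊆ (vectorSpan ℝ K).comap (LinearMap.inl ℝ E ℝ) := by
    intro z hz
    obtain ⟨s, hs⟩ := hfib (x + z) (by simpa using hz)
    have h := sub_mem (vsub_mem_vectorSpan ℝ hs h₀) (Submodule.smul_mem _ (s - s₀) hvert)
    simpa using h
  have htop := Submodule.eq_top_of_nonempty_interior' _
    ⟨0, mem_interior.2 ⟨_, hhor, isOpen_ball, mem_ball_self hε⟩⟩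
  rw [eq_top_iff]
  rintro ⟨z, t⟩ -
  have hz : z ∈ (vectorSpan ℝ K).comap (LinearMap.inl ℝ E ℝ) := htop ▸ Submodule.mem_top
  simpa using add_mem (Submodule.mem_comap.1 hz) (Submodule.smul_mem _ t hvert)

theorem Convex.exists_strongDual_forall_mem_snd_le (hK : Convex ℝ K)
    (hdown : ∀ z s t, (z, s) ∈ K → t ≤ s → (z, t) ∈ K) {ε : ℝ} (hε : 0 < ε)
    (hfib : ∀ z ∈ ball (0 : E) ε, ∃ s, (z, s) ∈ K) (hzero : ∀ s, ((0 : E), s) ∈ K → s ≤ 0) :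
    ∃ ℓ : StrongDual ℝ E, ∀ q ∈ K, q.2 ≤ ℓ q.1 := by
  have hnot : ((0 : E), (0 : ℝ)) ∉ interior K := by
    intro h
    obtain ⟨δ, hδ, hball⟩ := Metric.mem_nhds_iff.1 (mem_interior_iff_mem_nhds.1 h)
    have := hzero (δ / 2) (hball (by simp [Prod.dist_eq, abs_of_pos hδ, hδ]))
    linarith
  obtain ⟨f, hf0, hf⟩ := geometric_hahn_banach_of_nonempty_interior_point hK hnot
    (hK.interior_nonempty_of_forall_mem_ball_exists_prod_mem hdown hε hfib)
  set c := f ((0 : E), (1 : ℝ))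
  have hsplit : ∀ z s, f (z, s) = f (z, 0) + s * c := fun z s ↦ by
    rw [show (z, s) = (z, (0 : ℝ)) + s • ((0 : E), (1 : ℝ)) by simp, map_add, map_smul,
      smul_eq_mul]
  have hK' : ∀ q ∈ K, f (q.1, 0) + q.2 * c ≤ 0 := fun q hq ↦ by
    simpa [← hsplit, Prod.mk_zero_zero] using hf q hq
  have hc : 0 < c := by
    obtain ⟨s, hs⟩ := hfib 0 (mem_ball_self hε)
    have h := hK' _ (hdown _ _ (min s (-1)) hs (min_le_left _ _))
    simp only [Prod.mk_zero_zero, map_zero, zero_add] at h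
    refine lt_of_le_of_ne ?_ fun hc ↦ hf0 ?_
    · nlinarith [min_le_right s (-1)]
    · have hinl := LinearMap.eq_zero_of_forall_mem_ball_nonpos (f := (f : E × ℝ →ₗ[ℝ] ℝ).comp
        (LinearMap.inl ℝ E ℝ)) hε fun z hz ↦ by
          obtain ⟨s, hs⟩ := hfib z hz
          simpa [← hc] using hK' _ hs
      refine ContinuousLinearMap.ext fun ⟨z, s⟩ ↦ ?_
      rw [hsplit, ← hc, mul_zero, add_zero]
      simpa using congr($hinl z)
  refine ⟨-c⁻¹ • f.comp (ContinuousLinearMap.inl ℝ E ℝ), fun q hq ↦ ?_⟩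
  have := hK' q hq
  simp only [FunLike.coe_smul, Pi.smul_apply, ContinuousLinearMap.comp_apply,
    ContinuousLinearMap.inl_apply, smul_eq_mul, neg_mul, ← div_eq_inv_mul, ← neg_div]
  rw [le_div_iff₀ hc]
  linarith

end ConvexHypograph

@[simp, norm_cast]
theorem EReal.coe_finset_sum {ι : Type*} (s : Finset ι) (f : ι → ℝ) :
    ((∑ i ∈ s, f i : ℝ) : EReal) = ∑ i ∈ s, (f i : EReal) :=
  map_sum (⟨⟨Real.toEReal, EReal.coe_zero⟩, EReal.coe_add⟩ : ℝ →+ EReal) f s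

section Agent

variable {J : Type*} [Fintype J]

theorem dotp_eq_inner (p y : EuclideanSpace ℝ J) : dotp p y = inner ℝ p y := by
  simp [dotp, PiLp.inner_apply, mul_comm]

theorem isSupergradient_zero_iff {D : EuclideanSpace ℝ J → EReal} {p : EuclideanSpace ℝ J}
    (h0 : D 0 = 0) : IsSupergradient D p 0 ↔ ∀ x, D x ≤ dotp p x := by
  simp [IsSupergradient, h0]

theorem HypoConcave.convex_superlevel {u : EuclideanSpace ℝ J → EReal} (hu : HypoConcave u)
    (c : ℝ) : Convex ℝ {y | (c : EReal) ≤ u y} := by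
  intro y hy y' hy' a b ha hb hab
  simpa [← add_mul, hab] using hu (x := (y, c)) hy (y := (y', c)) hy' ha hb hab

theorem indiff_zero {u : EuclideanSpace ℝ J → EReal} {x0 g : EuclideanSpace ℝ J}
    (hfin : u x0 ≠ ⊥)
    (hmono : ∀ (x : EuclideanSpace ℝ J) (r : ℝ), u x ≠ ⊥ → 0 < r → u x < u (x + r • g)) :
    indiff u x0 g 0 = 0 := by
  refine le_antisymm (sSup_le ?_) (le_sSup ⟨0, by simp, by simp⟩)
  rintro _ ⟨r, rfl, h⟩
  by_contra! hr
  rw [add_zero] at h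
  have hne : u (x0 - r • g) ≠ ⊥ := fun hbot ↦ hfin (le_bot_iff.1 (hbot ▸ h))
  have := hmono _ r hne (by exact_mod_cast hr)
  rw [sub_add_cancel] at this
  exact (h.trans_lt this).false

end Agent

section Market

variable {I J : Type*} [Fintype I]

/-- Up to its boundary, the hypograph of `marketValue (fun i ↦ indiff (u i) (x0 i) g)`. -/
def achievableTrades (u : I → EuclideanSpace ℝ J → EReal) (x0 : I → EuclideanSpace ℝ J)
    (g : EuclideanSpace ℝ J) : Set (EuclideanSpace ℝ J × ℝ) :=
  {q | ∃ (x : I → EuclideanSpace ℝ J) (r : I → ℝ), ∑ i, x i = q.1 ∧ q.2 ≤ ∑ i, r i ∧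
    ∀ i, u i (x0 i) ≤ u i (x0 i + x i - r i • g)}

variable {u : I → EuclideanSpace ℝ J → EReal} {x0 : I → EuclideanSpace ℝ J}
  {g : EuclideanSpace ℝ J}

theorem mem_achievableTrades_of_le {z : EuclideanSpace ℝ J} {s t : ℝ}
    (h : (z, s) ∈ achievableTrades u x0 g) (hts : t ≤ s) : (z, t) ∈ achievableTrades u x0 g :=
  let ⟨x, r, hx, hs, hr⟩ := h
  ⟨x, r, hx, hts.trans hs, hr⟩

variable [Fintype J]

theorem sum_le_marketValue (D : I → EuclideanSpace ℝ J → EReal) (x : I → EuclideanSpace ℝ J) :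
    ∑ i, D i (x i) ≤ marketValue D (∑ i, x i) :=
  le_sSup ⟨x, rfl, rfl⟩

theorem marketValue_le_dotp {D : I → EuclideanSpace ℝ J → EReal} {p : EuclideanSpace ℝ J}
    (hp : ∀ i x, D i x ≤ dotp p x) (z : EuclideanSpace ℝ J) : marketValue D z ≤ dotp p z := by
  refine sSup_le ?_
  rintro _ ⟨x, rfl, rfl⟩
  calc ∑ i, D i (x i) ≤ ∑ i, (dotp p (x i) : EReal) := Finset.sum_le_sum fun i _ ↦ hp i (x i)
    _ = dotp p (∑ i, x i) := by simp [dotp_eq_inner, inner_sum]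

theorem convex_achievableTrades (hconc : ∀ i, HypoConcave (u i))
    (hne_top : ∀ i, u i (x0 i) ≠ ⊤) (hfin : ∀ i, u i (x0 i) ≠ ⊥) :
    Convex ℝ (achievableTrades u x0 g) := by
  rintro ⟨-, s⟩ ⟨x, r, rfl, hs, hx⟩ ⟨-, s'⟩ ⟨x', r', rfl, hs', hx'⟩ a b ha hb hab
  obtain rfl : b = 1 - a := eq_sub_of_add_eq' hab
  refine ⟨a • x + (1 - a) • x', a • r + (1 - a) • r', ?_, ?_, fun i ↦ ?_⟩
  · simp [Finset.sum_add_distrib, Finset.smul_sum]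
  · simp only [Prod.snd_add, Prod.smul_snd, smul_eq_mul, Pi.add_apply, Pi.smul_apply,
      Finset.sum_add_distrib, ← Finset.mul_sum]
    exact add_le_add (mul_le_mul_of_nonneg_left hs ha) (mul_le_mul_of_nonneg_left hs' hb)
  · have hc := EReal.coe_toReal (hne_top i) (hfin i)
    have h := hx i
    have h' := hx' i
    rw [← hc] at h h' ⊢
    have hcomb := (hconc i).convex_superlevel _ h h' ha hb hab
    rw [Set.mem_ofPred_eq] at hcomb
    convert hcomb using 2
    simp only [Pi.add_apply, Pi.smul_apply]
    module

theorem le_marketValue_of_mem_achievableTrades {q : EuclideanSpace ℝ J × ℝ}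
    (hq : q ∈ achievableTrades u x0 g) :
    (q.2 : EReal) ≤ marketValue (fun i ↦ indiff (u i) (x0 i) g) q.1 := by
  obtain ⟨x, r, hx, hs, hr⟩ := hq
  calc (q.2 : EReal) ≤ ∑ i, (r i : EReal) := by exact_mod_cast hs
    _ ≤ ∑ i, indiff (u i) (x0 i) g (x i) :=
      Finset.sum_le_sum fun i _ ↦ le_sSup ⟨r i, rfl, hr i⟩
    _ ≤ _ := hx ▸ sum_le_marketValue _ x

theorem exists_mem_achievableTrades_of_marketValue_ne_bot {z : EuclideanSpace ℝ J}
    (h : marketValue (fun i ↦ indiff (u i) (x0 i) g) z ≠ ⊥) :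
    ∃ s : ℝ, (z, s) ∈ achievableTrades u x0 g := by
  classical
  rw [marketValue, Ne, sSup_eq_bot] at h
  push Not at h
  obtain ⟨_, ⟨x, hx, rfl⟩, hne⟩ := h
  have hr : ∀ i, ∃ r : ℝ, u i (x0 i) ≤ u i (x0 i + x i - r • g) := fun i ↦ by
    have hi : indiff (u i) (x0 i) g (x i) ≠ ⊥ := fun hbot ↦ hne <| by
      rw [← Finset.add_sum_erase _ _ (Finset.mem_univ i), hbot, EReal.bot_add]
    rw [indiff, Ne, sSup_eq_bot] at hi
    push Not at hi
    obtain ⟨_, ⟨r, rfl, hr⟩, -⟩ := hi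
    exact ⟨r, hr⟩
  choose r hr using hr
  exact ⟨∑ i, r i, x, r, hx, le_rfl, hr⟩

theorem indiff_le_of_forall_mem_achievableTrades {φ : EuclideanSpace ℝ J → ℝ}
    (hφ : ∀ q ∈ achievableTrades u x0 g, q.2 ≤ φ q.1) (i : I) (x : EuclideanSpace ℝ J) :
    indiff (u i) (x0 i) g x ≤ φ x := by
  classical
  refine sSup_le ?_
  rintro _ ⟨r, rfl, hr⟩
  refine EReal.coe_le_coe_iff.2 (hφ (x, r) ⟨Pi.single i x, Pi.single i r, ?_, ?_, fun k ↦ ?_⟩)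
  · simp
  · simp
  · by_cases hk : k = i
    · subst hk; simpa using hr
    · simp [hk]

end Market

theorem equilibrium_iff_common_supergradient_general
    {I J : Type*} [Fintype I] [Fintype J]
    (u : I → EuclideanSpace ℝ J → EReal) (g : EuclideanSpace ℝ J)
    (x0 : I → EuclideanSpace ℝ J)
    (hconc : ∀ i, HypoConcave (u i))
    (hne_top : ∀ i x, u i x ≠ ⊤)
    (hfin : ∀ i, u i (x0 i) ≠ ⊥)
    (hmono : ∀ i, ∀ x : EuclideanSpace ℝ J, ∀ r : ℝ, u i x ≠ ⊥ → 0 < r →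
      u i x < u i (x + r • g))
    (hS : ∃ ε : ℝ, 0 < ε ∧ ∀ z : EuclideanSpace ℝ J, ‖z‖ ≤ ε →
      marketValue (fun i => indiff (u i) (x0 i) g) z ≠ ⊥ ∧
      marketValue (fun i => indiff (u i) (x0 i) g) z ≠ ⊤) :
    marketValue (fun i => indiff (u i) (x0 i) g) 0 = 0 ↔
      ∃ p : EuclideanSpace ℝ J, ∀ i,
        IsSupergradient (indiff (u i) (x0 i) g) p 0 := by
  have hD0 (i : I) : indiff (u i) (x0 i) g 0 = 0 := indiff_zero (hfin i) (hmono i)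
  simp only [isSupergradient_zero_iff (hD0 _)]
  constructor
  · intro hv0
    obtain ⟨ε, hε, hS⟩ := hS
    have hK := convex_achievableTrades (g := g) hconc (fun i ↦ hne_top i _) hfin
    obtain ⟨ℓ, hℓ⟩ := hK.exists_strongDual_forall_mem_snd_le
      (fun _ _ _ ↦ mem_achievableTrades_of_le) hε
      (fun z hz ↦ exists_mem_achievableTrades_of_marketValue_ne_bot
        (hS z (mem_ball_zero_iff.1 hz).le).1)
      (fun s hs ↦ by simpa [hv0] using le_marketValue_of_mem_achievableTrades hs)
    refine ⟨(InnerProductSpace.toDual ℝ _).symm ℓ, fun i x ↦ ?_⟩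
    rw [dotp_eq_inner, InnerProductSpace.toDual_symm_apply]
    exact indiff_le_of_forall_mem_achievableTrades hℓ i x
  · rintro ⟨p, hp⟩
    refine le_antisymm (by simpa [dotp_eq_inner] using marketValue_le_dotp hp 0) ?_
    simpa [hD0] using sum_le_marketValue (fun i ↦ indiff (u i) (x0 i) g) 0

/-- Lemma ve, 1 ⇔ 2: equilibrium iff a common supergradient of
the indifference price functions at 0 exists. -/
theorem equilibrium_iff_common_supergradient
    {I J : Type*} [Fintype I] [Nonempty I] [Fintype J] [Nonempty J]
    (u : I → EuclideanSpace ℝ J → EReal) (g : EuclideanSpace ℝ J)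
    (x0 : I → EuclideanSpace ℝ J)
    (husc : ∀ i, UpperSemicontinuous (u i))
    (hconc : ∀ i, HypoConcave (u i))
    (hne_top : ∀ i x, u i x ≠ ⊤)
    (hfin : ∀ i, u i (x0 i) ≠ ⊥)
    (hmono : ∀ i, ∀ x : EuclideanSpace ℝ J, ∀ r : ℝ, u i x ≠ ⊥ → 0 < r →
      u i x < u i (x + r • g))
    (hS : ∃ ε : ℝ, 0 < ε ∧ ∀ z : EuclideanSpace ℝ J, ‖z‖ ≤ ε →
      marketValue (fun i => indiff (u i) (x0 i) g) z ≠ ⊥ ∧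
      marketValue (fun i => indiff (u i) (x0 i) g) z ≠ ⊤) :
    marketValue (fun i => indiff (u i) (x0 i) g) 0 = 0 ↔
      ∃ p : EuclideanSpace ℝ J, ∀ i,
        IsSupergradient (indiff (u i) (x0 i) g) p 0 :=
  equilibrium_iff_common_supergradient_general u g x0 hconc hne_top hfin hmono hS
end
end

section
/- Let u : ℝ^J → ℝ ∪ {−∞} be upper semicontinuous with u(x⁰) finite, let D(x) := sup{r ∈ ℝ : u(x⁰ + x − r·g) ≥ u(x⁰)}, and let p ∈ ℝ^J be a supergradient of D at x̄ with p·g = 1, so that the surplus s := D(x̄) − p·x̄ satisfies s ≥ 0. If δ > 0 is such that u(y + s·g) ≥ u(y) + δ·s for y := x⁰ + x̄ − D(x̄)·g, then the post-trade position x¹ := x⁰ + x̄ − (p·x̄)·g satisfies u(x¹) ≥ u(x⁰) + δ·s. -/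
open scoped BigOperators
open Metric Filter

noncomputable section

/-! The supergradient inequality at `0`, where `D 0 ≥ 0`, gives `s = D(x̄) − p·x̄ ≥ 0`.
Since `u` is nondecreasing along `g`, every price `r < D(x̄)` is acceptable, i.e.
`u(x⁰ + x̄ − r·g) ≥ u(x⁰)`; upper semicontinuity makes the set of acceptable prices closed,
so `D(x̄)` itself is acceptable: `u(y) ≥ u(x⁰)`. The gain hypothesis and `y + s·g = x¹` finish. -/

section

variable {J : Type*} [Fintype J]

theorem dotp_neg (p y : EuclideanSpace ℝ J) : dotp p (-y) = -dotp p y := by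
  simp only [dotp, PiLp.neg_apply, mul_neg, Finset.sum_neg_distrib]

theorem IsSupergradient.dotp_le {D : EuclideanSpace ℝ J → EReal} {p xb : EuclideanSpace ℝ J}
    {d : ℝ} (hsg : IsSupergradient D p xb) (hd : (d : EReal) = D xb) (hD0 : 0 ≤ D 0) :
    dotp p xb ≤ d := by
  have h := hD0.trans (hsg.2.2 0)
  rw [← hd, zero_sub, dotp_neg, ← EReal.coe_add, ← EReal.coe_zero, EReal.coe_le_coe_iff] at h
  linarith

variable {u : EuclideanSpace ℝ J → EReal} {x0 g x : EuclideanSpace ℝ J}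

theorem zero_le_indiff_zero : (0 : EReal) ≤ indiff u x0 g 0 :=
  le_sSup ⟨0, by simp, by simp⟩

theorem le_apply_of_lt_indiff (hmono : ∀ y, ∀ r : ℝ, 0 < r → u y ≤ u (y + r • g)) {r : ℝ}
    (hr : (r : EReal) < indiff u x0 g x) : u x0 ≤ u (x0 + x - r • g) := by
  obtain ⟨_, ⟨r', rfl, hr'⟩, hlt⟩ := lt_sSup_iff.1 hr
  calc u x0 ≤ u (x0 + x - r' • g) := hr'
    _ ≤ u (x0 + x - r' • g + (r' - r) • g) := hmono _ _ (sub_pos.2 (EReal.coe_lt_coe_iff.1 hlt))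
    _ = u (x0 + x - r • g) := by congr 1; module

theorem UpperSemicontinuous.le_apply_indiff (husc : UpperSemicontinuous u)
    (hmono : ∀ y, ∀ r : ℝ, 0 < r → u y ≤ u (y + r • g)) {d : ℝ}
    (hd : (d : EReal) = indiff u x0 g x) : u x0 ≤ u (x0 + x - d • g) := by
  have hclosed : IsClosed {r : ℝ | u x0 ≤ u (x0 + x - r • g)} :=
    (husc.isClosed_preimage (u x0)).preimage (by fun_prop)
  have hlt : Set.Iio d ⊆ {r : ℝ | u x0 ≤ u (x0 + x - r • g)} := fun r hr =>
    le_apply_of_lt_indiff hmono (hd ▸ EReal.coe_lt_coe_iff.2 hr)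
  exact hclosed.closure_subset_iff.2 hlt (closure_Iio d ▸ Set.self_mem_Iic)

end

theorem post_trade_surplus_gain_general
    {J : Type*} [Fintype J]
    (u : EuclideanSpace ℝ J → EReal) (g x0 : EuclideanSpace ℝ J)
    (husc : UpperSemicontinuous u)
    (hmono : ∀ x : EuclideanSpace ℝ J, ∀ r : ℝ, u x ≠ ⊥ → 0 < r →
      u x < u (x + r • g))
    (p xb : EuclideanSpace ℝ J)
    (hsg : IsSupergradient (indiff u x0 g) p xb)
    (d : ℝ) (hd : (d : EReal) = indiff u x0 g xb)
    (δ : ℝ)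
    (hgain : u (x0 + xb - d • g) + (((δ * (d - dotp p xb)) : ℝ) : EReal) ≤
      u ((x0 + xb - d • g) + (d - dotp p xb) • g)) :
    0 ≤ d - dotp p xb ∧
      u x0 + (((δ * (d - dotp p xb)) : ℝ) : EReal) ≤
        u (x0 + xb - dotp p xb • g) := by
  have hmono_le : ∀ y, ∀ r : ℝ, 0 < r → u y ≤ u (y + r • g) := fun y r hr => by
    by_cases hy : u y = ⊥
    · exact hy ▸ bot_le
    · exact (hmono y r hy hr).le
  refine ⟨sub_nonneg.2 (hsg.dotp_le hd zero_le_indiff_zero), ?_⟩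
  calc u x0 + (((δ * (d - dotp p xb)) : ℝ) : EReal)
      ≤ u (x0 + xb - d • g) + (((δ * (d - dotp p xb)) : ℝ) : EReal) := by
        gcongr
        exact husc.le_apply_indiff hmono_le hd
    _ ≤ u ((x0 + xb - d • g) + (d - dotp p xb) • g) := hgain
    _ = u (x0 + xb - dotp p xb • g) := by congr 1; module

/-- the surplus is nonnegative and the post-trade position gains
at least `δ·s` in utility. -/
theorem post_trade_surplus_gain
    {J : Type*} [Fintype J] [Nonempty J]
    (u : EuclideanSpace ℝ J → EReal) (g x0 : EuclideanSpace ℝ J)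
    (husc : UpperSemicontinuous u)
    (hconc : HypoConcave u)
    (hne_top : ∀ x, u x ≠ ⊤)
    (hfin : u x0 ≠ ⊥)
    (hmono : ∀ x : EuclideanSpace ℝ J, ∀ r : ℝ, u x ≠ ⊥ → 0 < r →
      u x < u (x + r • g))
    (p xb : EuclideanSpace ℝ J)
    (hsg : IsSupergradient (indiff u x0 g) p xb)
    (hpg : dotp p g = 1)
    (d : ℝ) (hd : (d : EReal) = indiff u x0 g xb)
    (δ : ℝ) (hδ : 0 < δ)
    (hgain : u (x0 + xb - d • g) + (((δ * (d - dotp p xb)) : ℝ) : EReal) ≤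
      u ((x0 + xb - d • g) + (d - dotp p xb) • g)) :
    0 ≤ d - dotp p xb ∧
      u x0 + (((δ * (d - dotp p xb)) : ℝ) : EReal) ≤
        u (x0 + xb - dotp p xb • g) :=
  post_trade_surplus_gain_general u g x0 husc hmono p xb hsg d hd δ hgain
end
end
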